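/- The Pareto front of the OneJumpZeroJump problem equals the set {(c, n + 2k − c) : c ∈ ℤ, 2k ≤ c ≤ n} ∪ {(k, n + k), (n + k, k)} ⊆ ℝ², and this set has exactly n − 2k + 3 elements. -/
import Mathlib


open Finset

/-- Number of 1-bits of a bit string `x ∈ {0,1}^n`. -/
def onesCount {n : ℕ} (x : Fin n → Bool) : ℕ :=
  (Finset.univ.filter fun i => x i = true).card

/-- Number of 0-bits of a bit string `x ∈ {0,1}^n`. -/
def zerosCount {n : ℕ} (x : Fin n → Bool) : ℕ :=
  (Finset.univ.filter fun i => x i = false).card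

/-- First objective of the OneJumpZeroJump problem with parameter `k`. -/
noncomputable def ojzjF1 (n k : ℕ) (x : Fin n → Bool) : ℝ :=
  if onesCount x ≤ n - k ∨ x = fun _ => true then (k : ℝ) + onesCount x
  else (n : ℝ) - onesCount x

/-- Second objective of the OneJumpZeroJump problem with parameter `k`. -/
noncomputable def ojzjF2 (n k : ℕ) (x : Fin n → Bool) : ℝ :=
  if zerosCount x ≤ n - k ∨ x = fun _ => false then (k : ℝ) + zerosCount x
  else (n : ℝ) - zerosCount x

/-- `u` dominates `v` (for maximization of both coordinates). -/
def dominates (u v : ℝ × ℝ) : Prop := v.1 ≤ u.1 ∧ v.2 ≤ u.2 ∧ u ≠ v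

/-- `x` is Pareto optimal for OneJumpZeroJump: no `y` has a dominating objective vector. -/
def ojzjParetoOptimal (n k : ℕ) (x : Fin n → Bool) : Prop :=
  ∀ y : Fin n → Bool, ¬ dominates (ojzjF1 n k y, ojzjF2 n k y) (ojzjF1 n k x, ojzjF2 n k x)

/-- The Pareto front of OneJumpZeroJump: objective vectors of Pareto optimal solutions. -/
def ojzjParetoFront (n k : ℕ) : Set (ℝ × ℝ) :=
  {p | ∃ x : Fin n → Bool, ojzjParetoOptimal n k x ∧ (ojzjF1 n k x, ojzjF2 n k x) = p}

/-- The claimed description `{(c, n+2k−c) : c ∈ ℤ, 2k ≤ c ≤ n} ∪ {(k, n+k), (n+k, k)}`. -/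
def ojzjFrontSet (n k : ℕ) : Set (ℝ × ℝ) :=
  {p | ∃ c : ℤ, 2 * (k : ℤ) ≤ c ∧ c ≤ (n : ℤ) ∧ p = ((c : ℝ), (n : ℝ) + 2 * k - c)} ∪
    {((k : ℝ), (n : ℝ) + k), ((n : ℝ) + k, (k : ℝ))}

lemma onesCount_le {n : ℕ} (x : Fin n → Bool) : onesCount x ≤ n := by
  classical
  exact (Finset.card_filter_le _ _).trans (by simp)

lemma ones_add_zeros {n : ℕ} (x : Fin n → Bool) :
    onesCount x + (Finset.univ.filter fun i => x i = false).card = n := by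
  classical
  have := Finset.card_filter_add_card_filter_not
    (s := (Finset.univ : Finset (Fin n))) (p := fun i => x i = true)
  simpa [onesCount, Bool.not_eq_true] using this

lemma onesCount_eq_n_iff {n : ℕ} (x : Fin n → Bool) :
    onesCount x = n ↔ x = fun _ => true := by
  classical
  rw [onesCount]
  constructor
  · intro h
    funext i
    have : (Finset.univ.filter fun i => x i = true) = Finset.univ := by
      apply Finset.eq_univ_of_card; simpa using h
    have := Finset.mem_filter.mp (this ▸ Finset.mem_univ i)
    exact this.2
  · intro h; subst h; simp

lemma onesCount_eq_zero_iff {n : ℕ} (x : Fin n → Bool) :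
    onesCount x = 0 ↔ x = fun _ => false := by
  classical
  rw [onesCount, Finset.card_eq_zero, Finset.filter_eq_empty_iff]
  constructor
  · intro h; funext i; simpa using h (Finset.mem_univ i)
  · intro h i _; subst h; simp

lemma exists_onesCount (n m : ℕ) (hm : m ≤ n) :
    ∃ x : Fin n → Bool, onesCount x = m := by
  classical
  refine ⟨fun i => decide ((i : ℕ) < m), ?_⟩
  have h : ∀ j ∈ Finset.range m, j < n := fun j hj => lt_of_lt_of_le (Finset.mem_range.mp hj) hm
  have : (Finset.univ.filter fun i : Fin n => (decide ((i : ℕ) < m)) = true)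
      = Finset.attachFin (Finset.range m) h := by
    ext i
    simp [Finset.mem_attachFin]
  rw [onesCount, this, Finset.card_attachFin, Finset.card_range]

lemma zerosCount_eq {n : ℕ} (x : Fin n → Bool) : zerosCount x = n - onesCount x := by
  have h := ones_add_zeros x
  unfold zerosCount
  omega

def valN (n k m : ℕ) : ℕ × ℕ :=
  if m = 0 then (k, n + k)
  else if m = n then (n + k, k)
  else if m < k then (k + m, m)
  else if m ≤ n - k then (k + m, n + k - m)
  else (n - m, n + k - m)

lemma f_eq (n k : ℕ) (hk : 2 ≤ k) (hkn : 2 * k < n) (x : Fin n → Bool) :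
    (ojzjF1 n k x, ojzjF2 n k x)
      = (((valN n k (onesCount x)).1 : ℝ), ((valN n k (onesCount x)).2 : ℝ)) := by
  obtain ⟨m, hmdef⟩ : ∃ m, onesCount x = m := ⟨_, rfl⟩
  have hm : m ≤ n := hmdef ▸ onesCount_le x
  have hz : zerosCount x = n - m := by rw [zerosCount_eq, hmdef]
  have hc1 : (x = fun _ => true) ↔ m = n := by rw [← onesCount_eq_n_iff, hmdef]
  have hc2 : (x = fun _ => false) ↔ m = 0 := by rw [← onesCount_eq_zero_iff, hmdef]
  have e1 : ((n - m : ℕ) : ℝ) = (n : ℝ) - m := by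
    rw [Nat.cast_sub hm]
  have e2 : ((n + k - m : ℕ) : ℝ) = (n : ℝ) + k - m := by
    rw [Nat.cast_sub (by omega)]; push_cast; ring
  rw [ojzjF1, ojzjF2]
  simp only [hc1, hc2, hz, hmdef, valN]
  split_ifs <;>
    first
      | (exfalso; omega)
      | (rw [Prod.mk.injEq]
         refine ⟨?_, ?_⟩ <;> (try simp only [e1, e2]) <;> (try push_cast [*]) <;> (try ring_nf) <;>
           (try omega) <;> (try ring))

def domN (a b : ℕ × ℕ) : Prop := b.1 ≤ a.1 ∧ b.2 ≤ a.2 ∧ (a.1 ≠ b.1 ∨ a.2 ≠ b.2)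

lemma dom_cast (a b : ℕ × ℕ) :
    dominates ((a.1 : ℝ), (a.2 : ℝ)) ((b.1 : ℝ), (b.2 : ℝ)) ↔ domN a b := by
  simp only [dominates, domN, ne_eq, Prod.mk.injEq, Nat.cast_le, Nat.cast_inj, not_and_or]

lemma pareto_iff (n k : ℕ) (hk : 2 ≤ k) (hkn : 2 * k < n) (x : Fin n → Bool) :
    ojzjParetoOptimal n k x ↔
      ∀ m' ≤ n, ¬ domN (valN n k m') (valN n k (onesCount x)) := by
  constructor
  · intro h m' hm'
    obtain ⟨y, hy⟩ := exists_onesCount n m' hm'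
    have := h y
    rw [show ((ojzjF1 n k y, ojzjF2 n k y) : ℝ × ℝ)
        = (((valN n k (onesCount y)).1 : ℝ), ((valN n k (onesCount y)).2 : ℝ)) from
      f_eq n k hk hkn y,
      show ((ojzjF1 n k x, ojzjF2 n k x) : ℝ × ℝ)
        = (((valN n k (onesCount x)).1 : ℝ), ((valN n k (onesCount x)).2 : ℝ)) from
      f_eq n k hk hkn x, dom_cast, hy] at this
    exact this
  · intro h y
    rw [f_eq n k hk hkn y, f_eq n k hk hkn x, dom_cast]
    exact h (onesCount y) (onesCount_le y)

lemma good_pareto (n k : ℕ) (hk : 2 ≤ k) (hkn : 2 * k < n) (m : ℕ) (hm : m ≤ n)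
    (hgood : m = 0 ∨ m = n ∨ (k ≤ m ∧ m ≤ n - k)) :
    ∀ m' ≤ n, ¬ domN (valN n k m') (valN n k m) := by
  intro m' hm'
  simp only [valN, domN]
  split_ifs <;> (dsimp only [domN]; omega)

lemma bad_dominated (n k m : ℕ) (hk : 2 ≤ k) (hkn : 2 * k < n) (hm : m ≤ n)
    (h1 : m ≠ 0) (h2 : m ≠ n) (h3 : ¬(k ≤ m ∧ m ≤ n - k)) :
    ∃ m' ≤ n, domN (valN n k m') (valN n k m) := by
  rcases lt_or_ge m k with hc | hc
  · exact ⟨k, by omega, by simp only [valN, domN]; split_ifs <;> (dsimp only; omega)⟩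
  · exact ⟨n - k, by omega, by simp only [valN, domN]; split_ifs <;> (dsimp only; omega)⟩

lemma valN_zero (n k : ℕ) : valN n k 0 = (k, n + k) := by simp [valN]

lemma valN_n (n k : ℕ) (hk : 2 ≤ k) (hkn : 2 * k < n) : valN n k n = (n + k, k) := by
  unfold valN
  rw [if_neg (by omega), if_pos rfl]

lemma valN_mid (n k m : ℕ) (hk : 2 ≤ k) (hkn : 2 * k < n) (h1 : k ≤ m) (h2 : m ≤ n - k) :
    valN n k m = (k + m, n + k - m) := by
  unfold valN
  rw [if_neg (by omega), if_neg (by omega), if_neg (by omega), if_pos h2]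

lemma front_eq (n k : ℕ) (hk : 2 ≤ k) (hkn : 2 * k < n) :
    ojzjParetoFront n k = ojzjFrontSet n k := by
  ext p
  constructor
  · rintro ⟨x, hx, rfl⟩
    rw [f_eq n k hk hkn x]
    have hm : onesCount x ≤ n := onesCount_le x
    have hgood : onesCount x = 0 ∨ onesCount x = n ∨ (k ≤ onesCount x ∧ onesCount x ≤ n - k) := by
      by_contra hbad
      push_neg at hbad
      obtain ⟨m', hm', hd⟩ := bad_dominated n k (onesCount x) hk hkn hm hbad.1 hbad.2.1
        (by intro hcon; have := hbad.2.2 hcon.1; omega)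
      exact (pareto_iff n k hk hkn x).mp hx m' hm' hd
    rcases hgood with h0 | hn | ⟨h1, h2⟩
    · rw [h0, valN_zero]
      right; left
      rw [Prod.mk.injEq]
      exact ⟨by push_cast; ring, by push_cast; ring⟩
    · rw [hn, valN_n n k hk hkn]
      right; right
      rw [Set.mem_singleton_iff, Prod.mk.injEq]
      exact ⟨by push_cast; ring, by push_cast; ring⟩
    · rw [valN_mid n k _ hk hkn h1 h2]
      left
      refine ⟨(k : ℤ) + onesCount x, by omega, by omega, ?_⟩
      rw [Prod.mk.injEq]
      exact ⟨by push_cast; ring, by rw [Nat.cast_sub (by omega)]; push_cast; ring⟩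
  · intro hp
    rcases hp with ⟨c, hc1, hc2, rfl⟩ | hp
    · obtain ⟨m, hmk⟩ : ∃ m : ℕ, (c : ℤ) = (k : ℤ) + m := ⟨(c - k).toNat, by omega⟩
      have hm1 : k ≤ m := by omega
      have hm2 : m ≤ n - k := by omega
      obtain ⟨x, hx⟩ := exists_onesCount n m (by omega)
      refine ⟨x, (pareto_iff n k hk hkn x).mpr ?_, ?_⟩
      · rw [hx]
        exact good_pareto n k hk hkn m (by omega) (Or.inr (Or.inr ⟨hm1, hm2⟩))
      · rw [f_eq n k hk hkn x, hx, valN_mid n k m hk hkn hm1 hm2]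
        rw [Prod.mk.injEq]
        exact ⟨by rw [hmk]; push_cast; ring,
          by rw [Nat.cast_sub (by omega), hmk]; push_cast; ring⟩
    · rcases hp with rfl | hp
      · obtain ⟨x, hx⟩ := exists_onesCount n 0 (by omega)
        refine ⟨x, (pareto_iff n k hk hkn x).mpr ?_, ?_⟩
        · rw [hx]; exact good_pareto n k hk hkn 0 (by omega) (Or.inl rfl)
        · rw [f_eq n k hk hkn x, hx, valN_zero, Prod.mk.injEq]
          exact ⟨by push_cast; ring, by push_cast; ring⟩
      · rw [Set.mem_singleton_iff] at hp
        subst hp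
        obtain ⟨x, hx⟩ := exists_onesCount n n (by omega)
        refine ⟨x, (pareto_iff n k hk hkn x).mpr ?_, ?_⟩
        · rw [hx]; exact good_pareto n k hk hkn n (by omega) (Or.inr (Or.inl rfl))
        · rw [f_eq n k hk hkn x, hx, valN_n n k hk hkn, Prod.mk.injEq]
          exact ⟨by push_cast; ring, by push_cast; ring⟩

lemma card_front (n k : ℕ) (hk : 2 ≤ k) (hkn : 2 * k < n) :
    (ojzjFrontSet n k).ncard = n - 2 * k + 3 := by
  classical
  set f : ℕ → ℝ × ℝ := fun c => ((c : ℝ), (n : ℝ) + 2 * k - c) with hf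
  have hinj : Function.Injective f := by
    intro a b hab
    have h1 := congrArg Prod.fst hab
    simp only [hf] at h1
    exact_mod_cast h1
  set a₁ : ℝ × ℝ := ((k : ℝ), (n : ℝ) + k) with ha₁
  set a₂ : ℝ × ℝ := ((n : ℝ) + k, (k : ℝ)) with ha₂
  set F : Finset (ℝ × ℝ) := (Finset.Icc (2 * k) n).image f ∪ {a₁, a₂} with hF
  have hset : ojzjFrontSet n k = ↑F := by
    ext p
    simp only [ojzjFrontSet, hF, Finset.coe_union, Set.mem_union, Finset.coe_image,
      Set.mem_image, Finset.mem_coe, Finset.mem_Icc, Set.mem_setOf_eq,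
      Finset.coe_insert, Set.mem_insert_iff, Finset.coe_singleton,
      Set.mem_singleton_iff, ha₁, ha₂, hf]
    constructor
    · rintro (⟨c, hc1, hc2, rfl⟩ | h)
      · left
        refine ⟨c.toNat, ⟨by omega, by omega⟩, ?_⟩
        have : ((c.toNat : ℕ) : ℝ) = (c : ℝ) := by
          rw [show ((c.toNat : ℕ) : ℝ) = ((c.toNat : ℤ) : ℝ) by push_cast; ring]
          congr 1
          omega
        rw [this]
      · right; exact h
    · rintro (⟨c, ⟨hc1, hc2⟩, rfl⟩ | h)
      · left
        exact ⟨(c : ℤ), by omega, by omega, by push_cast; ring_nf⟩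
      · right; exact h
  rw [hset, Set.ncard_coe_finset, hF]
  have hd : Disjoint ((Finset.Icc (2 * k) n).image f) ({a₁, a₂} : Finset (ℝ × ℝ)) := by
    rw [Finset.disjoint_left]
    rintro p hp hmem
    obtain ⟨c, hc, rfl⟩ := Finset.mem_image.mp hp
    rw [Finset.mem_Icc] at hc
    rw [Finset.mem_insert, Finset.mem_singleton] at hmem
    rcases hmem with h | h
    · have := congrArg Prod.fst h
      simp only [hf, ha₁] at this
      have : c = k := by exact_mod_cast this
      omega
    · have := congrArg Prod.fst h
      simp only [hf, ha₂] at this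
      have : c = n + k := by exact_mod_cast this
      omega
  rw [Finset.card_union_of_disjoint hd, Finset.card_image_of_injective _ hinj, Nat.card_Icc]
  have h12 : a₁ ≠ a₂ := by
    intro h
    have := congrArg Prod.fst h
    simp only [ha₁, ha₂] at this
    have : k = n + k := by exact_mod_cast this
    omega
  rw [Finset.card_pair h12]
  omega

/-- The Pareto front of the OneJumpZeroJump problem (with `2 ≤ k < n/2`) equals
`{(c, n + 2k − c) : c ∈ ℤ, 2k ≤ c ≤ n} ∪ {(k, n + k), (n + k, k)}`, and this set has
exactly `n − 2k + 3` elements. -/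
theorem ojzj_pareto_front (n k : ℕ) (hk : 2 ≤ k) (hkn : 2 * k < n) :
    ojzjParetoFront n k = ojzjFrontSet n k ∧ (ojzjFrontSet n k).ncard = n - 2 * k + 3 :=
  ⟨front_eq n k hk hkn, card_front n k hk hkn⟩
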